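/- Let G = (V,E) be a finite simple undirected graph with positive edge weights and unique shortest paths, let s, v, t be vertices pairwise connected in G, and let f ∈ E. If f lies on the unique shortest path π(s,t) and f lies on the unique shortest path π(v,t), then f does not lie on the unique shortest path π(s,v). (Case 1 in the proof of Lemma 3.1.) -/

import Mathlib

open scoped ENNReal

variable {V : Type*}

/-- The total weight of a walk: the sum of the weights of its edges (in `ℝ≥0∞`). -/
noncomputable def walkWeight {G : SimpleGraph V} (wt : Sym2 V → NNReal)
    {u v : V} (p : G.Walk u v) : ℝ≥0∞ :=
  (p.edges.map (fun e => (wt e : ℝ≥0∞))).sum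

/-- The weighted shortest-path distance: the infimum over all walks from `u` to `v`
of their total weight (in `ℝ≥0∞`, so it is `∞` if `u` and `v` are not connected). -/
noncomputable def wdist (G : SimpleGraph V) (wt : Sym2 V → NNReal) (u v : V) : ℝ≥0∞ :=
  ⨅ p : G.Walk u v, walkWeight wt p

/-- `G` has unique shortest paths: for every pair of connected vertices there is exactly
one walk of minimum total weight. -/
def HasUniqueShortestPaths (G : SimpleGraph V) (wt : Sym2 V → NNReal) : Prop :=
  ∀ u v : V, G.Reachable u v →
    ∃! p : G.Walk u v, walkWeight wt p = wdist G wt u v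

/-!
Orient `f` along each of the three shortest paths. Along a shortest path from `u` through a dart
`x → y` of positive weight, `d(u, x) < d(u, y)` and `d(y, w) < d(x, w)` for the far end `w`.
Comparing distances to `t` forces `π(s,t)` and `π(v,t)` to traverse `f` in the same direction
`x → y`. If `π(s,v)` also used `f`, then comparing distances to `s` would force the direction
`x → y` on it too, and then comparing distances to `v` contradicts `π(v,t)`.
-/

open SimpleGraph Walk

variable {G : SimpleGraph V} {wt : Sym2 V → NNReal}

lemma walkWeight_append {u v w : V} (p : G.Walk u v) (q : G.Walk v w) :
    walkWeight wt (p.append q) = walkWeight wt p + walkWeight wt q := by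
  simp [walkWeight, edges_append]

lemma walkWeight_reverse {u v : V} (p : G.Walk u v) :
    walkWeight wt p.reverse = walkWeight wt p := by
  simp [walkWeight, edges_reverse, List.sum_reverse]

lemma walkWeight_toWalk {u v : V} (h : G.Adj u v) :
    walkWeight wt h.toWalk = wt s(u, v) := by
  simp [walkWeight]

lemma walkWeight_ne_top {u v : V} (p : G.Walk u v) : walkWeight wt p ≠ ∞ := by
  unfold walkWeight
  induction p.edges <;> simp_all

lemma wdist_le_walkWeight {u v : V} (p : G.Walk u v) : wdist G wt u v ≤ walkWeight wt p :=
  iInf_le _ p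

lemma wdist_comm (u v : V) : wdist G wt u v = wdist G wt v u := by
  suffices h : ∀ a b : V, wdist G wt a b ≤ wdist G wt b a from le_antisymm (h u v) (h v u)
  exact fun a b => le_iInf fun p => walkWeight_reverse (wt := wt) p ▸ wdist_le_walkWeight _

variable (wt) in
def IsShortestWalk {u v : V} (p : G.Walk u v) : Prop :=
  walkWeight wt p = wdist G wt u v

lemma IsShortestWalk.reverse {u v : V} {p : G.Walk u v} (hp : IsShortestWalk wt p) :
    IsShortestWalk wt p.reverse := by
  rw [IsShortestWalk, walkWeight_reverse, wdist_comm]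
  exact hp

lemma IsShortestWalk.of_isSubwalk {u₁ v₁ u₂ v₂ : V} {p : G.Walk u₁ v₁} {q : G.Walk u₂ v₂}
    (hq : IsShortestWalk wt q) (hpq : p.IsSubwalk q) : IsShortestWalk wt p := by
  obtain ⟨ru, rv, rfl⟩ := hpq
  refine le_antisymm (le_iInf fun r => ?_) (wdist_le_walkWeight p)
  have h : walkWeight wt ru + walkWeight wt p + walkWeight wt rv ≤
      walkWeight wt ru + walkWeight wt r + walkWeight wt rv := by
    calc _ = wdist G wt u₂ v₂ := by rw [← walkWeight_append, ← walkWeight_append]; exact hq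
      _ ≤ walkWeight wt ((ru.append r).append rv) := wdist_le_walkWeight _
      _ = _ := by rw [walkWeight_append, walkWeight_append]
  exact (ENNReal.add_le_add_iff_left (walkWeight_ne_top ru)).1
    ((ENNReal.add_le_add_iff_right (walkWeight_ne_top rv)).1 h)

lemma IsShortestWalk.wdist_fst_lt_wdist_snd (hwt : ∀ e ∈ G.edgeSet, 0 < wt e) {u v : V}
    {p : G.Walk u v} (hp : IsShortestWalk wt p) {d : G.Dart} (hd : d ∈ p.darts) :
    wdist G wt u d.fst < wdist G wt u d.snd := by
  have hsub : d.adj.toWalk.IsSubwalk p := by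
    rw [isSubwalk_iff_support_isInfix]
    simpa [Adj.toWalk] using mem_darts_iff_fst_snd_infix_support.1 hd
  obtain ⟨ru, rv, hp_eq⟩ := hsub
  have hprefix : IsShortestWalk wt (ru.append d.adj.toWalk) :=
    hp.of_isSubwalk (isSubwalk_of_append_left hp_eq)
  have hpos : (wt d.edge : ℝ≥0∞) ≠ 0 := by
    simpa using (hwt _ d.edge_mem).ne'
  calc wdist G wt u d.fst ≤ walkWeight wt ru := wdist_le_walkWeight ru
    _ < walkWeight wt ru + wt d.edge := ENNReal.lt_add_right (walkWeight_ne_top ru) hpos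
    _ = wdist G wt u d.snd := by rw [← hprefix, walkWeight_append, walkWeight_toWalk]; rfl

lemma IsShortestWalk.wdist_snd_lt_wdist_fst (hwt : ∀ e ∈ G.edgeSet, 0 < wt e) {u v : V}
    {p : G.Walk u v} (hp : IsShortestWalk wt p) {d : G.Dart} (hd : d ∈ p.darts) :
    wdist G wt v d.snd < wdist G wt v d.fst :=
  hp.reverse.wdist_fst_lt_wdist_snd hwt (d := d.symm) (by simpa [darts_reverse] using hd)

theorem stmt6_general (G : SimpleGraph V) (wt : Sym2 V → NNReal)
    (hwt : ∀ e ∈ G.edgeSet, 0 < wt e)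
    (s v t : V)
    (f : Sym2 V)
    (qst : G.Walk s t) (hqst : walkWeight wt qst = wdist G wt s t)
    (qvt : G.Walk v t) (hqvt : walkWeight wt qvt = wdist G wt v t)
    (qsv : G.Walk s v) (hqsv : walkWeight wt qsv = wdist G wt s v)
    (hf1 : f ∈ qst.edges) (hf2 : f ∈ qvt.edges) :
    f ∉ qsv.edges := by
  intro hf3
  obtain ⟨d, hd, rfl⟩ := List.mem_map.1 hf1
  obtain ⟨d₂, hd₂, hd₂d⟩ := List.mem_map.1 hf2
  obtain ⟨d₃, hd₃, hd₃d⟩ := List.mem_map.1 hf3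
  rcases (dart_edge_eq_iff d₂ d).1 hd₂d with h₂ | h₂ <;> rw [h₂] at hd₂
  · rcases (dart_edge_eq_iff d₃ d).1 hd₃d with h₃ | h₃ <;> rw [h₃] at hd₃
    · exact lt_asymm (IsShortestWalk.wdist_fst_lt_wdist_snd hwt hqvt hd₂)
        (IsShortestWalk.wdist_snd_lt_wdist_fst hwt hqsv hd₃)
    · exact lt_asymm (IsShortestWalk.wdist_fst_lt_wdist_snd hwt hqst hd)
        (IsShortestWalk.wdist_fst_lt_wdist_snd hwt hqsv hd₃)
  · exact lt_asymm (IsShortestWalk.wdist_snd_lt_wdist_fst hwt hqst hd)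
      (IsShortestWalk.wdist_snd_lt_wdist_fst hwt hqvt hd₂)

theorem stmt6 [Fintype V] [DecidableEq V] (G : SimpleGraph V) (wt : Sym2 V → NNReal)
    (hwt : ∀ e ∈ G.edgeSet, 0 < wt e)
    (huniq : HasUniqueShortestPaths G wt)
    (s v t : V)
    (hst : G.Reachable s t) (hvt : G.Reachable v t) (hsv : G.Reachable s v)
    (f : Sym2 V) (hf : f ∈ G.edgeSet)
    (qst : G.Walk s t) (hqst : walkWeight wt qst = wdist G wt s t)
    (qvt : G.Walk v t) (hqvt : walkWeight wt qvt = wdist G wt v t)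
    (qsv : G.Walk s v) (hqsv : walkWeight wt qsv = wdist G wt s v)
    (hf1 : f ∈ qst.edges) (hf2 : f ∈ qvt.edges) :
    f ∉ qsv.edges :=
  stmt6_general G wt hwt s v t f qst hqst qvt hqvt qsv hqsv hf1 hf2
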